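/- For a > 0 and all integers T ≥ 1, e^a - (1 + a/T)^T ≥ (a^2 e^a)/(2T) · e^{-a^2/T} · (1/(1+a)); hence there exists a constant C₀ > 0 (depending on a) such that e^a - (1+a/T)^T ≥ C₀/T for all T ≥ 1, i.e., the first-order Euler error is Θ(1/T) from below. -/

import Mathlib

/-- Sharpened log inequality: `log (1+x) ≤ x - x²/(2(1+x))` for `x ≥ 0`. -/
lemma log_add_one_le_sharp (x : ℝ) (hx : 0 ≤ x) :
    Real.log (1 + x) ≤ x - x ^ 2 / (2 * (1 + x)) := by
  set g : ℝ → ℝ := fun y => y / 2 + 1 / 2 - (2 * (1 + y))⁻¹ - Real.log (1 + y) with hg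
  have hd : ∀ y : ℝ, 0 ≤ y →
      HasDerivAt g (1 / 2 - (-(2 * 1) / (2 * (1 + y)) ^ 2) - (0 + 1) / (1 + y)) y := by
    intro y hy
    have h1y : (0:ℝ) < 1 + y := by linarith
    have hinv : HasDerivAt (fun z : ℝ => (2 * (1 + z))⁻¹) (-(2 * 1) / (2 * (1 + y)) ^ 2) y := by
      have h : HasDerivAt (fun z : ℝ => 2 * (1 + z)) (2 * 1) y := by
        have := ((hasDerivAt_const y (1:ℝ)).add (hasDerivAt_id y)).const_mul (2:ℝ)
        simpa using this
      exact h.inv (by positivity)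
    have hlog : HasDerivAt (fun z : ℝ => Real.log (1 + z)) ((0 + 1) / (1 + y)) y :=
      ((hasDerivAt_const y (1:ℝ)).add (hasDerivAt_id y)).log (ne_of_gt h1y)
    exact ((((hasDerivAt_id y).div_const 2).add_const (1/2)).sub hinv).sub hlog
  have hmono : MonotoneOn g (Set.Ici 0) := by
    apply monotoneOn_of_deriv_nonneg (convex_Ici 0)
    · exact fun y hy => ((hd y hy).continuousAt).continuousWithinAt
    · intro y hy
      rw [interior_Ici] at hy
      exact ((hd y (le_of_lt hy)).differentiableAt).differentiableWithinAt
    · intro y hy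
      rw [interior_Ici] at hy
      rw [(hd y hy.le).deriv]
      have h1y : (0:ℝ) < 1 + y := by linarith [(Set.mem_Ioi.mp hy).le]
      have : (1:ℝ)/2 - (-(2 * 1) / (2 * (1 + y)) ^ 2) - (0 + 1) / (1 + y)
          = y ^ 2 / (2 * (1 + y) ^ 2) := by
        field_simp
        ring
      rw [this]
      positivity
  have hg0 : g 0 = 0 := by
    simp [hg]
  have := hmono (Set.self_mem_Ici) (Set.mem_Ici.mpr hx) hx
  rw [hg0] at this
  have h1x : (0:ℝ) < 1 + x := by linarith
  have hgx : 0 ≤ x / 2 + 1 / 2 - (2 * (1 + x))⁻¹ - Real.log (1 + x) := this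
  have heq : x / 2 + 1 / 2 - (2 * (1 + x))⁻¹ = x - x ^ 2 / (2 * (1 + x)) := by
    field_simp
    ring
  linarith [heq ▸ hgx]

/-- Lower bound for the explicit-Euler error on `ẋ = a x` with `a > 0`:
`e^a - (1 + a/T)^T ≥ (a² e^a)/(2T) · e^{-a²/T} · 1/(1+a)`, and hence there is a
constant `C₀ > 0` with `e^a - (1+a/T)^T ≥ C₀ / T` for all `T ≥ 1`. -/
theorem stmt_1 (a : ℝ) (ha : 0 < a) :
    (∀ T : ℕ, 1 ≤ T →
      Real.exp a - (1 + a / T) ^ T ≥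
        a ^ 2 * Real.exp a / (2 * T) * Real.exp (-(a ^ 2) / T) * (1 / (1 + a))) ∧
    ∃ C₀ : ℝ, 0 < C₀ ∧ ∀ T : ℕ, 1 ≤ T →
      Real.exp a - (1 + a / T) ^ T ≥ C₀ / T := by
  have main : ∀ T : ℕ, 1 ≤ T →
      Real.exp a - (1 + a / T) ^ T ≥
        a ^ 2 * Real.exp a / (2 * T) * Real.exp (-(a ^ 2) / T) * (1 / (1 + a)) := by
    intro T hT
    set t : ℝ := (T : ℝ) with ht
    have ht1 : (1:ℝ) ≤ t := by rw [ht]; exact_mod_cast hT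
    have ht0 : (0:ℝ) < t := by linarith
    have hx0 : 0 ≤ a / t := by positivity
    have h1x : (0:ℝ) < 1 + a / t := by linarith
    -- step 1: (1 + a/t)^T = exp (t * log (1 + a/t))
    have hpow : (1 + a / t) ^ T = Real.exp (t * Real.log (1 + a / t)) := by
      rw [ht, Real.exp_nat_mul, Real.exp_log h1x]
    -- step 2: t * log(1+a/t) ≤ a - u, where u = a²/(2t(1+a))
    set u : ℝ := a ^ 2 / (2 * t * (1 + a)) with hu
    have hu0 : 0 < u := by positivity
    have hlog : t * Real.log (1 + a / t) ≤ a - u := by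
      have h := log_add_one_le_sharp (a / t) hx0
      have h2 : t * Real.log (1 + a / t) ≤ t * (a / t - (a / t) ^ 2 / (2 * (1 + a / t))) :=
        mul_le_mul_of_nonneg_left h (le_of_lt ht0)
      have heq : t * (a / t - (a / t) ^ 2 / (2 * (1 + a / t))) = a - a ^ 2 / (2 * (t + a)) := by
        have hta : (0:ℝ) < t + a := by linarith
        field_simp
      rw [heq] at h2
      have hle : u ≤ a ^ 2 / (2 * (t + a)) := by
        rw [hu]
        apply div_le_div_of_nonneg_left (by positivity) (by positivity)
        nlinarith
      linarith
    -- step 3: exp(a - u) ≤ exp a - u * exp(a - u), since 1 + u ≤ exp u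
    have hexp_le : (1 + a / t) ^ T ≤ Real.exp (a - u) := by
      rw [hpow]; exact Real.exp_le_exp.mpr hlog
    have key : Real.exp a - Real.exp (a - u) ≥ u * Real.exp (a - u) := by
      have h1 : u + 1 ≤ Real.exp u := Real.add_one_le_exp u
      have h2 : (u + 1) * Real.exp (a - u) ≤ Real.exp u * Real.exp (a - u) :=
        mul_le_mul_of_nonneg_right h1 (le_of_lt (Real.exp_pos _))
      rw [← Real.exp_add] at h2
      have : u + (a - u) = a := by ring
      rw [this] at h2
      nlinarith [Real.exp_pos (a - u)]
    -- step 4: exp(a - u) ≥ exp(a - a²/t) since u ≤ a²/t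
    have huat : u ≤ a ^ 2 / t := by
      rw [hu]
      apply div_le_div_of_nonneg_left (by positivity) ht0
      nlinarith
    have hfinal : u * Real.exp (a - u) ≥
        a ^ 2 * Real.exp a / (2 * t) * Real.exp (-(a ^ 2) / t) * (1 / (1 + a)) := by
      have h1 : Real.exp (a - u) ≥ Real.exp (a - a ^ 2 / t) :=
        Real.exp_le_exp.mpr (by linarith)
      have h2 : Real.exp (a - a ^ 2 / t) = Real.exp a * Real.exp (-(a ^ 2) / t) := by
        rw [← Real.exp_add]; ring_nf
      have hrhs : a ^ 2 * Real.exp a / (2 * t) * Real.exp (-(a ^ 2) / t) * (1 / (1 + a))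
          = u * (Real.exp a * Real.exp (-(a ^ 2) / t)) := by
        rw [hu]
        field_simp
      rw [hrhs, ← h2]
      exact mul_le_mul_of_nonneg_left h1 (le_of_lt hu0)
    calc Real.exp a - (1 + a / t) ^ T ≥ Real.exp a - Real.exp (a - u) := by linarith
      _ ≥ u * Real.exp (a - u) := key
      _ ≥ _ := hfinal
  refine ⟨main, a ^ 2 * Real.exp a / 2 * Real.exp (-(a ^ 2)) * (1 / (1 + a)), by positivity, ?_⟩
  intro T hT
  have h := main T hT
  have ht1 : (1:ℝ) ≤ (T:ℝ) := by exact_mod_cast hT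
  have ht0 : (0:ℝ) < (T:ℝ) := by linarith
  have hexp : Real.exp (-(a ^ 2)) ≤ Real.exp (-(a ^ 2) / T) := by
    apply Real.exp_le_exp.mpr
    rw [le_div_iff₀ ht0]
    nlinarith
  have : a ^ 2 * Real.exp a / 2 * Real.exp (-(a ^ 2)) * (1 / (1 + a)) / T ≤
      a ^ 2 * Real.exp a / (2 * T) * Real.exp (-(a ^ 2) / T) * (1 / (1 + a)) := by
    have h1a : (0:ℝ) < 1 + a := by linarith
    rw [div_le_iff₀ ht0]
    have e1 : a ^ 2 * Real.exp a / (2 * (T:ℝ)) * Real.exp (-(a ^ 2) / T) * (1 / (1 + a)) * T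
        = a ^ 2 * Real.exp a / 2 * Real.exp (-(a ^ 2) / T) * (1 / (1 + a)) := by
      field_simp
    rw [e1]
    have := mul_le_mul_of_nonneg_left hexp (by positivity : (0:ℝ) ≤ a ^ 2 * Real.exp a / 2 * (1 / (1 + a)))
    nlinarith [Real.exp_pos (-(a^2)/(T:ℝ)), Real.exp_pos (-(a^2))]
  linarith
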